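/- Many-layers regime, unscaled (first claim of Theorem 2): if |x| = |θ^1| = ⋯ = |θ^l| = 1.5, then for every k ∈ {1,…,l}, the magnitude of the partial derivative of h(y − g(x)) with respect to θ^k is at most |d| / 2^{l−k+1}, where g is the chain of l one-parameter tanh neurons and d = h'(y − g(x)). -/

import Mathlib

/-- The chain of one-parameter `tanh` neurons: `chain θ l x = tanh (θ l * ⋯ tanh (θ 1 * x))`. -/
noncomputable def chain (θ : ℕ → ℝ) : ℕ → ℝ → ℝ
  | 0, x => x
  | n + 1, x => Real.tanh (θ (n + 1) * chain θ n x)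

/-!
By the chain rule, `∂ chain θ l x / ∂ θ k` is the product of `chain θ (k-1) x`, of the factors
`1 - (chain θ i x)²` for `k ≤ i ≤ l`, and of the weights `θ i` for `k < i ≤ l`. With all weights
and the input of modulus `3/2`, every layer stays at modulus at least `5/6`, because
`tanh (3/2 · 5/6) = tanh (5/4) ≥ 5/6`. Hence each factor `1 - (chain θ i x)²` is at most
`1 - (5/6)² ≤ 1/3`, while the other factors are at most `3/2`, so each layer contributes a
factor at most `1/2`. The derivative of `h (y - chain θ l x)` adds the factor `h'`.
-/

open Finset Real

namespace Real

theorem hasDerivAt_tanh (t : ℝ) : HasDerivAt tanh (1 - tanh t ^ 2) t := by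
  have hcosh := (cosh_pos t).ne'
  have h := (hasDerivAt_sinh t).div (hasDerivAt_cosh t) hcosh
  have hderiv : (cosh t * cosh t - sinh t * sinh t) / cosh t ^ 2 = 1 - tanh t ^ 2 := by
    rw [tanh_eq_sinh_div_cosh]
    field_simp
  rw [hderiv] at h
  exact h.congr_of_eventuallyEq (.of_forall tanh_eq_sinh_div_cosh)

theorem tanh_le_tanh {s t : ℝ} (h : s ≤ t) : tanh s ≤ tanh t := by
  have mem (r : ℝ) : tanh r ∈ Set.Ioo (-1) 1 := ⟨neg_one_lt_tanh r, tanh_lt_one r⟩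
  rwa [← artanh_le_artanh_iff (mem s) (mem t), artanh_tanh, artanh_tanh]

theorem abs_tanh (t : ℝ) : |tanh t| = tanh |t| := by
  rcases abs_cases t with ⟨ht, hsign⟩ | ⟨ht, hsign⟩
  · rw [ht, abs_of_nonneg]
    simpa [tanh_zero] using tanh_le_tanh hsign
  · rw [ht, tanh_neg, abs_of_nonpos]
    simpa [tanh_zero] using tanh_le_tanh hsign.le

theorem five_sixths_le_tanh : (5 / 6 : ℝ) ≤ tanh (5 / 4) := by
  -- equivalently `11 ≤ exp (5 / 2) = e² · exp (1 / 2)`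
  have he : (2.7182818283 : ℝ) < exp 1 := exp_one_gt_d9
  have hhalf : (3 / 2 : ℝ) ≤ exp (1 / 2) := by linarith [add_one_le_exp (1 / 2 : ℝ)]
  have hsq : exp (5 / 4) * exp (5 / 4) = exp 1 * exp 1 * exp (1 / 2) := by
    rw [← exp_add, ← exp_add, ← exp_add]; norm_num
  have hinv : exp (5 / 4) * exp (-(5 / 4)) = 1 := by rw [← exp_add]; simp
  have h11 : 11 ≤ exp (5 / 4) * exp (5 / 4) := by
    rw [hsq]; nlinarith [exp_pos (1 : ℝ)]
  rw [tanh_eq, le_div_iff₀ (by positivity)]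
  nlinarith [exp_pos (5 / 4 : ℝ), exp_pos (-(5 / 4) : ℝ)]

end Real

theorem abs_one_sub_sq_le {t c : ℝ} (hc : 0 ≤ c) (hct : c ≤ |t|) (ht : |t| ≤ 1) :
    |1 - t ^ 2| ≤ 1 - c ^ 2 := by
  rw [← sq_abs t, abs_of_nonneg (by nlinarith [abs_nonneg t])]
  nlinarith

theorem abs_prod_le_pow_card {ι : Type*} {s : Finset ι} {f : ι → ℝ} {a : ℝ}
    (h : ∀ i ∈ s, |f i| ≤ a) : |∏ i ∈ s, f i| ≤ a ^ s.card := by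
  rw [abs_prod, ← prod_const]
  exact prod_le_prod (fun _ _ ↦ abs_nonneg _) h

namespace chain

variable {θ : ℕ → ℝ} {x : ℝ}

theorem abs_le_max (n : ℕ) : |chain θ n x| ≤ max |x| 1 := by
  cases n with
  | zero => exact le_max_left _ _
  | succ n => exact (abs_tanh_lt_one _).le.trans (le_max_right _ _)

theorem le_abs {b c : ℝ} (hc : 0 ≤ c) (hbc : c ≤ tanh (b * c)) (hx : c ≤ |x|) :
    ∀ n, (∀ i, 1 ≤ i → i ≤ n → b ≤ |θ i|) → c ≤ |chain θ n x|
  | 0, _ => hx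
  | n + 1, hθ => by
    have hprev := le_abs hc hbc hx n fun i hi hin ↦ hθ i hi (hin.trans n.le_succ)
    calc c ≤ tanh (b * c) := hbc
      _ ≤ tanh (|θ (n + 1)| * |chain θ n x|) :=
        tanh_le_tanh (mul_le_mul (hθ _ le_add_self le_rfl) hprev hc (abs_nonneg _))
      _ = |chain θ (n + 1) x| := by rw [chain, abs_tanh, abs_mul]

theorem abs_one_sub_sq_le {n : ℕ} {c : ℝ} (hn : 1 ≤ n) (hc : 0 ≤ c) (hcn : c ≤ |chain θ n x|) :
    |1 - chain θ n x ^ 2| ≤ 1 - c ^ 2 := by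
  obtain ⟨n, rfl⟩ : ∃ m, n = m + 1 := ⟨n - 1, by omega⟩
  exact _root_.abs_one_sub_sq_le hc hcn (abs_tanh_lt_one _).le

theorem update_of_lt {k n : ℕ} (u : ℝ) (hn : n < k) :
    chain (Function.update θ k u) n x = chain θ n x := by
  induction n with
  | zero => rfl
  | succ n ih =>
    rw [chain, chain, Function.update_of_ne hn.ne, ih (by omega)]

theorem hasDerivAt_update_self (j : ℕ) :
    HasDerivAt (fun u ↦ chain (Function.update θ (j + 1) u) (j + 1) x)
      ((1 - chain θ (j + 1) x ^ 2) * chain θ j x) (θ (j + 1)) := by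
  have hfun : (fun u ↦ chain (Function.update θ (j + 1) u) (j + 1) x) =
      fun u ↦ tanh (u * chain θ j x) := by
    funext u
    rw [chain, Function.update_self, update_of_lt u j.lt_succ_self]
  rw [hfun]
  have h := (hasDerivAt_tanh _).comp (θ (j + 1)) ((hasDerivAt_id' _).mul_const (chain θ j x))
  rwa [one_mul] at h

theorem hasDerivAt_update_succ {k n : ℕ} {D : ℝ}
    (hD : HasDerivAt (fun u ↦ chain (Function.update θ k u) n x) D (θ k)) (hk : k ≠ n + 1) :
    HasDerivAt (fun u ↦ chain (Function.update θ k u) (n + 1) x)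
      ((1 - chain θ (n + 1) x ^ 2) * (θ (n + 1) * D)) (θ k) := by
  simp only [chain, Function.update_of_ne hk.symm]
  exact (hasDerivAt_tanh _).comp_of_eq (θ k) (hD.const_mul _) (by rw [Function.update_eq_self])

/-- The partial derivative of `chain θ n x` in the weight `θ (j + 1)`. -/
noncomputable def partialDeriv (θ : ℕ → ℝ) (x : ℝ) (j n : ℕ) : ℝ :=
  chain θ j x * (∏ i ∈ Ioc j n, (1 - chain θ i x ^ 2)) * ∏ i ∈ Ioc (j + 1) n, θ i

theorem hasDerivAt_update {j n : ℕ} (hjn : j < n) :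
    HasDerivAt (fun u ↦ chain (Function.update θ (j + 1) u) n x) (partialDeriv θ x j n)
      (θ (j + 1)) := by
  induction n, hjn using Nat.le_induction with
  | base => simpa [partialDeriv, mul_comm] using hasDerivAt_update_self j
  | succ n hjn ih =>
    refine (hasDerivAt_update_succ ih (by omega)).congr_deriv ?_
    simp only [partialDeriv, prod_Ioc_succ_top (by omega : j ≤ n),
      prod_Ioc_succ_top (by omega : j + 1 ≤ n)]
    ring

theorem abs_partialDeriv_le {j n : ℕ} {a b : ℝ} (hjn : j < n) (hj : |chain θ j x| ≤ b)
    (hσ : ∀ i ∈ Ioc j n, |1 - chain θ i x ^ 2| ≤ a) (hθ : ∀ i ∈ Ioc (j + 1) n, |θ i| ≤ b) :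
    |partialDeriv θ x j n| ≤ (a * b) ^ (n - j) := by
  have ha : 0 ≤ a := (abs_nonneg _).trans (hσ n (by simp [hjn]))
  have hb : 0 ≤ b := (abs_nonneg _).trans hj
  have hσprod := abs_prod_le_pow_card hσ
  have hθprod := abs_prod_le_pow_card hθ
  rw [Nat.card_Ioc] at hσprod hθprod
  obtain ⟨m, hm⟩ : ∃ m, n - j = m + 1 := ⟨n - j - 1, by omega⟩
  rw [hm] at hσprod ⊢
  rw [show n - (j + 1) = m by omega] at hθprod
  calc |partialDeriv θ x j n|
      = |chain θ j x| * |∏ i ∈ Ioc j n, (1 - chain θ i x ^ 2)| * |∏ i ∈ Ioc (j + 1) n, θ i| := by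
        rw [partialDeriv, abs_mul, abs_mul]
    _ ≤ b * a ^ (m + 1) * b ^ m := by gcongr
    _ = (a * b) ^ (m + 1) := by ring

end chain

theorem many_layers_regime_unscaled (l k : ℕ) (hk1 : 1 ≤ k) (hkl : k ≤ l)
    (θ : ℕ → ℝ) (x y : ℝ) (hx : |x| = 1.5)
    (hθ : ∀ i, 1 ≤ i → i ≤ l → |θ i| = 1.5)
    (h : ℝ → ℝ) (hh : Differentiable ℝ h) :
    |deriv (fun u : ℝ => h (y - chain (Function.update θ k u) l x)) (θ k)| ≤
      |deriv h (y - chain θ l x)| / 2 ^ (l - k + 1) := by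
  obtain ⟨j, rfl⟩ : ∃ j, k = j + 1 := ⟨k - 1, by omega⟩
  have hlower : ∀ i, i ≤ l → 5 / 6 ≤ |chain θ i x| := fun i hil ↦
    chain.le_abs (b := 3 / 2) (by norm_num) (by norm_num [five_sixths_le_tanh])
      (by rw [hx]; norm_num) i fun i' hi' hi'i ↦ by rw [hθ i' hi' (hi'i.trans hil)]; norm_num
  have hbound : |chain.partialDeriv θ x j l| ≤ (1 / 2) ^ (l - j) := by
    refine (chain.abs_partialDeriv_le (a := 1 / 3) (b := 3 / 2) hkl
      ((chain.abs_le_max j).trans (by rw [hx]; norm_num)) (fun i hi ↦ ?_) (fun i hi ↦ ?_)).trans_eq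
      (by norm_num)
    · obtain ⟨hji, hil⟩ := mem_Ioc.mp hi
      exact (chain.abs_one_sub_sq_le (by omega) (by norm_num) (hlower i hil)).trans (by norm_num)
    · obtain ⟨hji, hil⟩ := mem_Ioc.mp hi
      rw [hθ i (by omega) hil]; norm_num
  have hderiv : HasDerivAt (fun u ↦ h (y - chain (Function.update θ (j + 1) u) l x))
      (deriv h (y - chain θ l x) * -chain.partialDeriv θ x j l) (θ (j + 1)) :=
    (hh _).hasDerivAt.comp_of_eq _ ((chain.hasDerivAt_update hkl).const_sub y)
      (by rw [Function.update_eq_self])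
  calc |deriv (fun u ↦ h (y - chain (Function.update θ (j + 1) u) l x)) (θ (j + 1))|
      = |deriv h (y - chain θ l x)| * |chain.partialDeriv θ x j l| := by
        rw [hderiv.deriv, abs_mul, abs_neg]
    _ ≤ |deriv h (y - chain θ l x)| * (1 / 2) ^ (l - j) := by gcongr
    _ = |deriv h (y - chain θ l x)| / 2 ^ (l - (j + 1) + 1) := by
        rw [show l - (j + 1) + 1 = l - j by omega, one_div, inv_pow, div_eq_mul_inv]
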